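/- Per-iteration descent of GD with adaptive warm-up step size: let f be (H0, H1)-smooth and define the iterate w_{k+1} = w_k − η_k ∇f(w_k) with η_k = 1/(10H0 + 20H1(f(w_k) − f*)). Then f(w_{k+1}) ≤ f(w_k) − (η_k/2)‖∇f(w_k)‖². In particular the function values are monotonically decreasing and the step sizes η_k are nondecreasing in k. -/

import Mathlib

/-!
The restriction `ψ(t) = f(w - t η ∇f(w))`, `t ∈ [0, 1]`, of `f` to the step satisfies
`ψ'(0) = -η ‖∇f(w)‖²`, and at every point where `f` has not risen above `f(w)` the Hessian
bound gives `ψ'' ≤ L η² ‖∇f(w)‖²` with `L = H0 + H1 (f(w) - f*)`. Since `η L < 1`,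
`ψ'` stays negative as long as `ψ ≤ ψ(0)` on the past, so by continuous induction the whole
segment stays in the sublevel set, and the second-order Taylor bound then yields
`f(w - η ∇f(w)) ≤ f(w) - η (1 - η L / 2) ‖∇f(w)‖²`. The step sizes grow because `f(w_k)`
decreases.
-/

open Set Filter Topology RealInnerProductSpace

lemma image_sub_le_mul_sub_of_hasDerivAt_le {f f' : ℝ → ℝ} {a b C : ℝ} (hab : a ≤ b)
    (hf : ∀ t ∈ Icc a b, HasDerivAt f (f' t) t) (hle : ∀ t ∈ Icc a b, f' t ≤ C) :
    f b - f a ≤ C * (b - a) := by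
  refine (convex_Icc a b).image_sub_le_mul_sub_of_deriv_le
    (fun t ht ↦ (hf t ht).continuousAt.continuousWithinAt)
    (fun t ht ↦ (hf t (interior_subset ht)).differentiableAt.differentiableWithinAt)
    (fun t ht ↦ ?_) a (left_mem_Icc.2 hab) b (right_mem_Icc.2 hab) hab
  rw [(hf t (interior_subset ht)).deriv]
  exact hle t (interior_subset ht)

lemma le_taylor_of_hasDerivAt_le {ψ ψ' ψ'' : ℝ → ℝ} {a b c : ℝ} (hab : a ≤ b)
    (hψ : ∀ t ∈ Icc a b, HasDerivAt ψ (ψ' t) t) (hψ' : ∀ t ∈ Icc a b, HasDerivAt ψ' (ψ'' t) t)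
    (hle : ∀ t ∈ Icc a b, ψ'' t ≤ c) :
    ψ b ≤ ψ a + ψ' a * (b - a) + c / 2 * (b - a) ^ 2 := by
  have hderiv : ∀ t ∈ Icc a b, ψ' t ≤ ψ' a + c * (t - a) := fun t ht ↦ by
    have := image_sub_le_mul_sub_of_hasDerivAt_le ht.1
      (fun s hs ↦ hψ' s ⟨hs.1, hs.2.trans ht.2⟩) (fun s hs ↦ hle s ⟨hs.1, hs.2.trans ht.2⟩)
    linarith
  have hremainder := image_sub_le_mul_sub_of_hasDerivAt_le (C := 0) hab
    (f := fun t ↦ ψ t - ψ' a * t - c / 2 * (t - a) ^ 2) (fun t ht ↦ by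
      simpa using ((hψ t ht).fun_sub ((hasDerivAt_id t).const_mul (ψ' a))).fun_sub
        ((((hasDerivAt_id t).sub_const a).fun_pow 2).const_mul (c / 2)))
    (fun t ht ↦ by linarith [hderiv t ht])
  simp only [sub_self, zero_pow two_ne_zero, mul_zero, sub_zero, zero_mul] at hremainder
  linarith

lemma le_left_of_hasDerivAt_neg_of_le_left {ψ ψ' : ℝ → ℝ} {a b : ℝ}
    (hψ : ∀ t ∈ Icc a b, HasDerivAt ψ (ψ' t) t)
    (hneg : ∀ t ∈ Ico a b, (∀ s ∈ Icc a t, ψ s ≤ ψ a) → ψ' t < 0) :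
    ∀ t ∈ Icc a b, ψ t ≤ ψ a := by
  have hclosed : IsClosed ({t | ψ t ≤ ψ a} ∩ Icc a b) := by
    rw [inter_comm]
    exact ContinuousOn.preimage_isClosed_of_isClosed
      (fun t ht ↦ (hψ t ht).continuousAt.continuousWithinAt) isClosed_Icc isClosed_Iic
  refine fun x hx ↦ hclosed.Icc_subset_of_forall_mem_nhdsGT_of_Icc_subset (le_refl (ψ a))
    (fun t ht hsub ↦ ?_) hx
  have hslope : ∀ᶠ s in 𝓝[>] t, slope ψ t s < 0 :=
    ((hψ t (Ico_subset_Icc_self ht)).hasDerivWithinAt.limsup_slope_le' (lt_irrefl t)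
      (hneg t ht hsub))
  filter_upwards [hslope, self_mem_nhdsWithin] with s hs (hts : t < s)
  rw [slope_def_field, div_neg_iff] at hs
  have : ψ t ≤ ψ a := hsub ⟨ht.1, le_rfl⟩
  show ψ s ≤ ψ a
  rcases hs with ⟨-, hs⟩ | ⟨hs, -⟩ <;> linarith

lemma le_sub_of_hasDerivAt_of_le_on_sublevel {ψ ψ' ψ'' : ℝ → ℝ} {b c : ℝ}
    (hψ : ∀ t ∈ Icc 0 1, HasDerivAt ψ (ψ' t) t) (hψ' : ∀ t ∈ Icc 0 1, HasDerivAt ψ' (ψ'' t) t)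
    (hb : 0 < b) (hcb : c < b) (hψ'0 : ψ' 0 = -b)
    (hle : ∀ t ∈ Icc 0 1, ψ t ≤ ψ 0 → ψ'' t ≤ c) :
    ψ 1 ≤ ψ 0 - b + c / 2 := by
  have hsublevel : ∀ t ∈ Icc (0 : ℝ) 1, ψ t ≤ ψ 0 :=
    le_left_of_hasDerivAt_neg_of_le_left hψ fun t ht hsub ↦ by
      have := image_sub_le_mul_sub_of_hasDerivAt_le ht.1
        (fun s hs ↦ hψ' s ⟨hs.1, hs.2.trans ht.2.le⟩)
        (fun s hs ↦ hle s ⟨hs.1, hs.2.trans ht.2.le⟩ (hsub s hs))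
      nlinarith [mul_pos hb (sub_pos.2 ht.2), mul_nonneg (sub_nonneg.2 hcb.le) ht.1]
  have := le_taylor_of_hasDerivAt_le zero_le_one hψ hψ' fun t ht ↦ hle t ht (hsublevel t ht)
  rw [hψ'0] at this
  linarith

section NormedSpace

variable {E F : Type*} [NormedAddCommGroup E] [NormedSpace ℝ E] [NormedAddCommGroup F]
  [NormedSpace ℝ F]

lemma DifferentiableAt.hasDerivAt_comp_add_smul {g : E → F} {x v : E} {t : ℝ}
    (hg : DifferentiableAt ℝ g (x + t • v)) :
    HasDerivAt (fun s : ℝ ↦ g (x + s • v)) (fderiv ℝ g (x + t • v) v) t := by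
  simpa [Function.comp_def] using
    hg.hasFDerivAt.comp_hasDerivAt t (((hasDerivAt_id t).smul_const v).const_add x)

lemma fderiv_fderiv_apply_le_norm_iteratedFDeriv (f : E → ℝ) (y v : E) :
    fderiv ℝ (fderiv ℝ f) y v v ≤ ‖iteratedFDeriv ℝ 2 f y‖ * ‖v‖ ^ 2 := by
  calc fderiv ℝ (fderiv ℝ f) y v v = iteratedFDeriv ℝ 2 f y ![v, v] := by
        simp [iteratedFDeriv_two_apply]
    _ ≤ ‖iteratedFDeriv ℝ 2 f y ![v, v]‖ := le_abs_self _
    _ ≤ ‖iteratedFDeriv ℝ 2 f y‖ * ∏ i, ‖![v, v] i‖ := (iteratedFDeriv ℝ 2 f y).le_opNorm _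
    _ = ‖iteratedFDeriv ℝ 2 f y‖ * ‖v‖ ^ 2 := by simp [Fin.prod_univ_two, sq]

end NormedSpace

variable {E : Type*} [NormedAddCommGroup E] [InnerProductSpace ℝ E] [CompleteSpace E]

theorem le_sub_of_gradient_step {f : E → ℝ} (hf : ContDiff ℝ 2 f) {x : E} {L η : ℝ}
    (hL : ∀ y, f y ≤ f x → ‖iteratedFDeriv ℝ 2 f y‖ ≤ L) (hη : 0 < η) (hηL : η * L < 1) :
    f (x - η • gradient f x) ≤ f x - η * (1 - η * L / 2) * ‖gradient f x‖ ^ 2 := by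
  set g := gradient f x
  rcases eq_or_ne g 0 with hg | hg
  · simp [hg]
  have hDf : Differentiable ℝ (fderiv ℝ f) :=
    (hf.fderiv_right (m := 1) (by norm_num)).differentiable one_ne_zero
  set v := -(η • g)
  have hv : ‖v‖ = η * ‖g‖ := by rw [norm_neg, norm_smul, Real.norm_of_nonneg hη.le]
  have hψ'0 : fderiv ℝ f (x + (0 : ℝ) • v) v = -(η * ‖g‖ ^ 2) := by
    rw [zero_smul, add_zero, ← inner_gradient_left, inner_neg_right, real_inner_smul_right,
      real_inner_self_eq_norm_sq]
  have hb : 0 < η * ‖g‖ ^ 2 := by positivity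
  have := le_sub_of_hasDerivAt_of_le_on_sublevel (c := L * (η * ‖g‖) ^ 2)
    (fun t _ ↦ ((hf.differentiable two_ne_zero) _).hasDerivAt_comp_add_smul)
    (fun t _ ↦ by simpa using (hDf _).hasDerivAt_comp_add_smul.clm_apply (hasDerivAt_const t v))
    hb (by nlinarith) hψ'0 fun t _ ht ↦ ?_
  · rw [zero_smul, one_smul, add_zero, ← sub_eq_add_neg] at this
    linarith
  calc fderiv ℝ (fderiv ℝ f) (x + t • v) v v ≤ ‖iteratedFDeriv ℝ 2 f (x + t • v)‖ * ‖v‖ ^ 2 :=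
        fderiv_fderiv_apply_le_norm_iteratedFDeriv f _ v
    _ ≤ L * (η * ‖g‖) ^ 2 := by
        rw [hv]
        gcongr
        exact hL _ (by simpa using ht)

/-- Per-iteration descent of GD with the adaptive warm-up step size. -/
theorem stmt_9 {d : ℕ} (f : EuclideanSpace ℝ (Fin d) → ℝ)
    (H0 H1 fstar : ℝ) (hH0 : 0 < H0) (hH1 : 0 < H1)
    (hf : ContDiff ℝ 2 f) (hfstar : IsGLB (Set.range f) fstar)
    (hs : ∀ z, ‖iteratedFDeriv ℝ 2 f z‖ ≤ H0 + H1 * (f z - fstar))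
    (w : ℕ → EuclideanSpace ℝ (Fin d)) (η : ℕ → ℝ)
    (hη : ∀ k, η k = 1 / (10 * H0 + 20 * H1 * (f (w k) - fstar)))
    (hstep : ∀ k, w (k + 1) = w k - η k • gradient f (w k)) :
    (∀ k, f (w (k + 1)) ≤ f (w k) - (η k / 2) * ‖gradient f (w k)‖ ^ 2) ∧
    (∀ k, f (w (k + 1)) ≤ f (w k)) ∧
    (∀ k, η k ≤ η (k + 1)) := by
  have hgap : ∀ z, 0 ≤ f z - fstar := fun z ↦ sub_nonneg.2 (hfstar.1 ⟨z, rfl⟩)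
  have hden : ∀ k, 0 < 10 * H0 + 20 * H1 * (f (w k) - fstar) := fun k ↦ by
    have := hgap (w k); positivity
  have hηpos : ∀ k, 0 < η k := fun k ↦ hη k ▸ one_div_pos.2 (hden k)
  have hdescent : ∀ k, f (w (k + 1)) ≤ f (w k) - (η k / 2) * ‖gradient f (w k)‖ ^ 2 := by
    intro k
    have hηL : η k * (H0 + H1 * (f (w k) - fstar)) ≤ 1 / 2 := by
      rw [hη k, one_div_mul_eq_div, div_le_iff₀ (hden k)]
      nlinarith [hgap (w k)]
    have := le_sub_of_gradient_step hf (fun y hy ↦ (hs y).trans (by gcongr)) (hηpos k)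
      (hηL.trans_lt (by norm_num))
    rw [hstep k]
    nlinarith [mul_nonneg (hηpos k).le (sq_nonneg ‖gradient f (w k)‖)]
  have hmono : ∀ k, f (w (k + 1)) ≤ f (w k) := fun k ↦
    (hdescent k).trans (sub_le_self _ (by have := hηpos k; positivity))
  refine ⟨hdescent, hmono, fun k ↦ ?_⟩
  rw [hη k, hη (k + 1)]
  gcongr
  · exact hden (k + 1)
  · exact hmono k
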